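/- Let p > 0, let T ∈ L_{p,∞} and let (T_n) ⊂ L_{p,∞} be a sequence such that (i) for every n, lim_{t→∞} t^{1/p} μ(t, T_n) = a_n exists, and (ii) dist_{L_{p,∞}}(T_n - T, (L_{p,∞})₀) → 0 as n → ∞. Then lim_{n→∞} a_n exists and lim_{t→∞} t^{1/p} μ(t, T) = lim_{n→∞} a_n. -/

import Mathlib

open MeasureTheory Filter Topology

variable {H : Type*} [NormedAddCommGroup H] [InnerProductSpace ℂ H] [CompleteSpace H]

/-- The `n`-th singular value (approximation number) of a bounded operator:
`μ(n,T) = inf{‖T - F‖ : rank F ≤ n}`. -/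
noncomputable def approxNum (T : H →L[ℂ] H) (n : ℕ) : ℝ :=
  sInf ((fun F : H →L[ℂ] H => ‖T - F‖) ''
    {F | Module.rank ℂ (LinearMap.range (F : H →ₗ[ℂ] H)) ≤ n})

/-- The singular value function `μ(t,T) = μ(⌊t⌋,T)` of a real variable `t`. -/
noncomputable def svf (T : H →L[ℂ] H) (t : ℝ) : ℝ :=
  approxNum T ⌊t⌋₊

/-- The weak Schatten quasi-norm `‖T‖_{p,∞} = sup_{t>0} t^{1/p} μ(t,T)`. -/
noncomputable def wkNorm (p : ℝ) (T : H →L[ℂ] H) : ℝ :=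
  sSup {x : ℝ | ∃ t : ℝ, 0 < t ∧ x = t ^ (1 / p) * svf T t}

/-- Membership in the weak Schatten ideal `L_{p,∞}`. -/
def MemWeakLp (p : ℝ) (T : H →L[ℂ] H) : Prop :=
  IsCompactOperator T ∧ BddAbove {x : ℝ | ∃ t : ℝ, 0 < t ∧ x = t ^ (1 / p) * svf T t}

/-- The separable part `(L_{p,∞})₀ = {V ∈ L_{p,∞} : t^{1/p} μ(t,V) → 0}`. -/
def sepPart (p : ℝ) : Set (H →L[ℂ] H) :=
  {V | MemWeakLp p V ∧ Tendsto (fun t : ℝ => t ^ (1 / p) * svf V t) atTop (𝓝 0)}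

/-- The distance of `T` to the separable part, in the `L_{p,∞}` quasi-norm. -/
noncomputable def distToSepPart (p : ℝ) (T : H →L[ℂ] H) : ℝ :=
  sInf ((fun V : H →L[ℂ] H => wkNorm p (T - V)) '' sepPart p)

/-!
Write `f_A(t) = t^{1/p} μ(t,A)`. Since `μ(s+u, A+B) ≤ μ(s,A) + μ(u,B)`, splitting `t = θt + (1-θ)t`
gives `f_{A+B}(t) ≤ θ^{-1/p} f_A(θt) + (1-θ)^{-1/p} f_B((1-θ)t)`, hence the same inequality for
`limsup_{t→∞}` and for `liminf ≤ liminf + limsup`. Choose `V_n ∈ (L_{p,∞})₀` with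
`‖T_n - T - V_n‖_{p,∞} → 0`. As `f_{V_n} → 0` and `f_{T_n} → a_n`, the inequalities applied to
`T = (T_n - V_n) - (T_n - T - V_n)` and `T_n = (T + V_n) + (T_n - T - V_n)` give
`limsup f_T ≤ θ^{-2/p} a_n + o(1)` and `a_n ≤ θ^{-2/p} liminf f_T + o(1)`. Letting `n → ∞` and
then `θ → 1` squeezes `liminf a_n`, `limsup a_n`, `liminf f_T` and `limsup f_T` together.
-/

open Set
open scoped ENNReal

set_option linter.unusedSectionVars false

namespace ENNReal

variable {α : Type*} {f : Filter α}

theorem limsup_add_le_limsup_add_limsup (u v : α → ℝ≥0∞) :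
    limsup (u + v) f ≤ limsup u f + limsup v f := by
  refine ENNReal.le_of_forall_pos_le_add fun ε hε hfin => ?_
  obtain ⟨hu, hv⟩ := ENNReal.add_lt_top.1 hfin
  have hε2 : (ε / 2 : ℝ≥0∞) ≠ 0 := by simpa using hε.ne'
  have hu' := eventually_lt_of_limsup_lt (ENNReal.lt_add_right hu.ne hε2)
  have hv' := eventually_lt_of_limsup_lt (ENNReal.lt_add_right hv.ne hε2)
  calc limsup (u + v) f ≤ (limsup u f + ε / 2) + (limsup v f + ε / 2) :=
        limsup_le_of_le (by isBoundedDefault)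
          ((hu'.and hv').mono fun _ hx => add_le_add hx.1.le hx.2.le)
    _ = limsup u f + limsup v f + ε := by rw [add_add_add_comm, ENNReal.add_halves]

theorem liminf_add_le_liminf_add_limsup (u v : α → ℝ≥0∞) :
    liminf (u + v) f ≤ liminf u f + limsup v f := by
  refine ENNReal.le_of_forall_pos_le_add fun ε hε hfin => ?_
  obtain ⟨hu, hv⟩ := ENNReal.add_lt_top.1 hfin
  have hε2 : (ε / 2 : ℝ≥0∞) ≠ 0 := by simpa using hε.ne'
  have hu' := frequently_lt_of_liminf_lt (by isBoundedDefault) (ENNReal.lt_add_right hu.ne hε2)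
  have hv' := eventually_lt_of_limsup_lt (ENNReal.lt_add_right hv.ne hε2)
  calc liminf (u + v) f ≤ (liminf u f + ε / 2) + (limsup v f + ε / 2) :=
        liminf_le_of_frequently_le'
          ((hu'.and_eventually hv').mono fun _ hx => add_le_add hx.1.le hx.2.le)
    _ = liminf u f + limsup v f + ε := by rw [add_add_add_comm, ENNReal.add_halves]

theorem eq_and_tendsto_of_le_mul_add {ι : Type*} {l : Filter ι} [l.NeBot] {c d : ι → ℝ≥0∞}
    (hc : Tendsto c l (𝓝 1)) (hd : ∀ i, d i ≠ ∞) {I S : ℝ≥0∞} (hIS : I ≤ S) (hS : S ≠ ∞)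
    {a η : ℕ → ℝ≥0∞} (hη : Tendsto η atTop (𝓝 0))
    (hupper : ∀ᶠ i in l, ∀ n, S ≤ c i * a n + d i * η n)
    (hlower : ∀ᶠ i in l, ∀ n, a n ≤ c i * I + d i * η n) :
    I = S ∧ Tendsto a atTop (𝓝 S) := by
  have hdη : ∀ i, Tendsto (fun n => d i * η n) atTop (𝓝 0) := fun i => by
    simpa using ENNReal.Tendsto.const_mul hη (Or.inr (hd i))
  have hlimsup : ∀ᶠ i in l, limsup a atTop ≤ c i * I := hlower.mono fun i hi => by
    have hlim : Tendsto (fun n => c i * I + d i * η n) atTop (𝓝 (c i * I)) := by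
      simpa using tendsto_const_nhds.add (hdη i)
    exact (limsup_le_limsup (Eventually.of_forall hi)).trans hlim.limsup_eq.le
  have hliminf : ∀ᶠ i in l, S ≤ c i * liminf a atTop :=
    (hupper.and (hc.eventually_ne ENNReal.one_ne_top)).mono fun i ⟨hi, hci⟩ =>
      calc S ≤ liminf (fun n => c i * a n + d i * η n) atTop :=
            le_liminf_of_le (by isBoundedDefault) (Eventually.of_forall hi)
        _ = c i * liminf a atTop :=
            (ENNReal.liminf_add_of_right_tendsto_zero (hdη i) (fun n => c i * a n)).trans
              (ENNReal.liminf_const_mul_of_ne_top hci)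
  have hI : I ≠ ∞ := ne_top_of_le_ne_top hS hIS
  have hinf_le_sup : liminf a atTop ≤ limsup a atTop := liminf_le_limsup
  have hsup : limsup a atTop ≤ I := by
    simpa using ge_of_tendsto (ENNReal.Tendsto.mul_const hc (Or.inr hI)) hlimsup
  have hinf_ne_top : liminf a atTop ≠ ∞ :=
    ne_top_of_le_ne_top hI (hinf_le_sup.trans hsup)
  have hinf : S ≤ liminf a atTop := by
    simpa using ge_of_tendsto (ENNReal.Tendsto.mul_const hc (Or.inr hinf_ne_top)) hliminf
  -- `S ≤ liminf a ≤ limsup a ≤ I ≤ S`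
  exact ⟨le_antisymm hIS (hinf.trans (hinf_le_sup.trans hsup)),
    tendsto_of_liminf_eq_limsup (le_antisymm (hinf_le_sup.trans (hsup.trans hIS)) hinf)
      (le_antisymm (hsup.trans hIS) (hinf.trans hinf_le_sup))⟩

end ENNReal

namespace Filter

variable {α : Type*} [Semifield α] [LinearOrder α] [IsStrictOrderedRing α]

theorem map_const_mul_atTop {c : α} (hc : 0 < c) : map (c * ·) atTop = atTop := by
  convert map_div_atTop_eq c⁻¹ (inv_pos.2 hc) using 2
  ext t
  rw [div_inv_eq_mul, mul_comm]

lemma limsup_comp_const_mul {β : Type*} [CompleteLattice β] (u : α → β) {c : α} (hc : 0 < c) :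
    limsup (fun t => u (c * t)) atTop = limsup u atTop := by
  change limsup (u ∘ (c * ·)) atTop = _
  rw [limsup_comp, map_const_mul_atTop hc]

lemma liminf_comp_const_mul {β : Type*} [CompleteLattice β] (u : α → β) {c : α} (hc : 0 < c) :
    liminf (fun t => u (c * t)) atTop = liminf u atTop := by
  change liminf (u ∘ (c * ·)) atTop = _
  rw [liminf_comp, map_const_mul_atTop hc]

theorem Tendsto.toReal_of_ofReal {ι : Type*} {l : Filter ι} {f : ι → ℝ} {L : ℝ≥0∞}
    (h : Tendsto (fun x => ENNReal.ofReal (f x)) l (𝓝 L)) (hL : L ≠ ∞) (hf : ∀ᶠ x in l, 0 ≤ f x) :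
    Tendsto f l (𝓝 L.toReal) :=
  ((ENNReal.tendsto_toReal hL).comp h).congr' (hf.mono fun _ hx => ENNReal.toReal_ofReal hx)

end Filter

lemma approxNum_le {A F : H →L[ℂ] H} {n : ℕ}
    (hF : Module.rank ℂ (LinearMap.range (F : H →ₗ[ℂ] H)) ≤ n) : approxNum A n ≤ ‖A - F‖ :=
  csInf_le ⟨0, by rintro _ ⟨G, -, rfl⟩; positivity⟩ ⟨F, hF, rfl⟩

lemma le_approxNum {A : H →L[ℂ] H} {n : ℕ} {x : ℝ}
    (h : ∀ F : H →L[ℂ] H, Module.rank ℂ (LinearMap.range (F : H →ₗ[ℂ] H)) ≤ n → x ≤ ‖A - F‖) :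
    x ≤ approxNum A n :=
  le_csInf ⟨‖A - 0‖, 0, by simp, rfl⟩ (by rintro _ ⟨F, hF, rfl⟩; exact h F hF)

lemma approxNum_nonneg (A : H →L[ℂ] H) (n : ℕ) : 0 ≤ approxNum A n :=
  le_approxNum fun _ _ => norm_nonneg _

lemma approxNum_antitone (A : H →L[ℂ] H) : Antitone (approxNum A) :=
  fun _ _ hmn => le_approxNum fun _ hF => approxNum_le (hF.trans (by exact_mod_cast hmn))

lemma approxNum_zero (n : ℕ) : approxNum (0 : H →L[ℂ] H) n = 0 :=
  le_antisymm (by simpa using approxNum_le (A := (0 : H →L[ℂ] H)) (F := 0) (n := n) (by simp))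
    (approxNum_nonneg 0 n)

lemma approxNum_neg (A : H →L[ℂ] H) (n : ℕ) : approxNum (-A) n = approxNum A n := by
  have key : ∀ B : H →L[ℂ] H, approxNum (-B) n ≤ approxNum B n := fun B =>
    le_approxNum fun F hF =>
      (approxNum_le (F := -F)
        (by rwa [ContinuousLinearMap.toLinearMap_neg, LinearMap.range_neg])).trans_eq
          (by rw [neg_sub_neg, norm_sub_rev])
  exact le_antisymm (key A) (by simpa using key (-A))

lemma rank_range_add_le (F G : H →L[ℂ] H) :
    Module.rank ℂ (LinearMap.range ((F + G : H →L[ℂ] H) : H →ₗ[ℂ] H)) ≤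
      Module.rank ℂ (LinearMap.range (F : H →ₗ[ℂ] H)) +
        Module.rank ℂ (LinearMap.range (G : H →ₗ[ℂ] H)) :=
  (Submodule.rank_mono (LinearMap.range_add_le _ _)).trans (Submodule.rank_add_le_rank_add_rank _ _)

lemma approxNum_add_le (A B : H →L[ℂ] H) (m n : ℕ) :
    approxNum (A + B) (m + n) ≤ approxNum A m + approxNum B n := by
  have key : ∀ F G : H →L[ℂ] H, Module.rank ℂ (LinearMap.range (F : H →ₗ[ℂ] H)) ≤ m →
      Module.rank ℂ (LinearMap.range (G : H →ₗ[ℂ] H)) ≤ n →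
      approxNum (A + B) (m + n) ≤ ‖A - F‖ + ‖B - G‖ := fun F G hF hG =>
    calc approxNum (A + B) (m + n) ≤ ‖(A + B) - (F + G)‖ :=
          approxNum_le ((rank_range_add_le F G).trans (by push_cast; exact add_le_add hF hG))
      _ ≤ ‖A - F‖ + ‖B - G‖ := by rw [add_sub_add_comm]; exact norm_add_le _ _
  rw [← sub_le_iff_le_add]
  refine le_approxNum fun F hF => ?_
  rw [sub_le_comm]
  exact le_approxNum fun G hG => by linarith [key F G hF hG]

lemma svf_neg (A : H →L[ℂ] H) (t : ℝ) : svf (-A) t = svf A t := approxNum_neg A _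

lemma svf_add_le (A B : H →L[ℂ] H) {s u : ℝ} (hs : 0 ≤ s) (hu : 0 ≤ u) :
    svf (A + B) (s + u) ≤ svf A s + svf B u := by
  have hfloor : ⌊s⌋₊ + ⌊u⌋₊ ≤ ⌊s + u⌋₊ :=
    Nat.le_floor (by push_cast; exact add_le_add (Nat.floor_le hs) (Nat.floor_le hu))
  exact (approxNum_antitone _ hfloor).trans (approxNum_add_le A B _ _)

noncomputable def scaledSvf (p : ℝ) (A : H →L[ℂ] H) (t : ℝ) : ℝ := t ^ (1 / p) * svf A t

lemma scaledSvf_nonneg (p : ℝ) (A : H →L[ℂ] H) {t : ℝ} (ht : 0 ≤ t) : 0 ≤ scaledSvf p A t :=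
  mul_nonneg (Real.rpow_nonneg ht _) (approxNum_nonneg _ _)

lemma scaledSvf_add_le (p : ℝ) (A B : H →L[ℂ] H) {θ t : ℝ} (hθ : θ ∈ Ioo 0 1) (ht : 0 ≤ t) :
    scaledSvf p (A + B) t ≤
      θ ^ (-(1 / p)) * scaledSvf p A (θ * t) +
        (1 - θ) ^ (-(1 / p)) * scaledSvf p B ((1 - θ) * t) := by
  have rescale : ∀ c : ℝ, 0 < c → c ^ (-(1 / p)) * (c * t) ^ (1 / p) = t ^ (1 / p) :=
    fun c hc => by
      rw [Real.mul_rpow hc.le ht, Real.rpow_neg hc.le,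
        inv_mul_cancel_left₀ (Real.rpow_pos_of_pos hc _).ne']
  have hsplit : svf (A + B) t ≤ svf A (θ * t) + svf B ((1 - θ) * t) := by
    simpa [← add_mul] using svf_add_le A B (mul_nonneg hθ.1.le ht)
      (mul_nonneg (sub_pos.2 hθ.2).le ht)
  calc scaledSvf p (A + B) t ≤ t ^ (1 / p) * (svf A (θ * t) + svf B ((1 - θ) * t)) :=
        mul_le_mul_of_nonneg_left hsplit (Real.rpow_nonneg ht _)
    _ = _ := by
        simp only [scaledSvf, ← mul_assoc, rescale θ hθ.1, rescale (1 - θ) (sub_pos.2 hθ.2)]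
        ring

lemma MemWeakLp.neg {p : ℝ} {A : H →L[ℂ] H} (hA : MemWeakLp p A) : MemWeakLp p (-A) :=
  ⟨hA.1.neg, by simpa only [svf_neg] using hA.2⟩

lemma MemWeakLp.add {p : ℝ} {A B : H →L[ℂ] H} (hA : MemWeakLp p A) (hB : MemWeakLp p B) :
    MemWeakLp p (A + B) := by
  obtain ⟨M, hM⟩ := hA.2
  obtain ⟨N, hN⟩ := hB.2
  refine ⟨hA.1.add hB.1, (1 / 2 : ℝ) ^ (-(1 / p)) * (M + N), ?_⟩
  rintro _ ⟨t, ht, rfl⟩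
  have h := scaledSvf_add_le p A B (by norm_num : (1 / 2 : ℝ) ∈ Ioo 0 1) ht.le
  norm_num only at h
  refine h.trans ?_
  rw [mul_add]
  gcongr
  · exact hM ⟨_, by positivity, rfl⟩
  · exact hN ⟨_, by positivity, rfl⟩

lemma MemWeakLp.sub {p : ℝ} {A B : H →L[ℂ] H} (hA : MemWeakLp p A) (hB : MemWeakLp p B) :
    MemWeakLp p (A - B) :=
  sub_eq_add_neg A B ▸ hA.add hB.neg

lemma wkNorm_nonneg (p : ℝ) (A : H →L[ℂ] H) : 0 ≤ wkNorm p A :=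
  Real.sSup_nonneg (by rintro _ ⟨t, ht, rfl⟩; exact scaledSvf_nonneg p A ht.le)

lemma zero_mem_sepPart (p : ℝ) : (0 : H →L[ℂ] H) ∈ sepPart p := by
  have hzero : ∀ t : ℝ, t ^ (1 / p) * svf (0 : H →L[ℂ] H) t = 0 := fun t => by
    rw [svf, approxNum_zero, mul_zero]
  refine ⟨⟨isCompactOperator_zero, 0, ?_⟩, ?_⟩
  · rintro _ ⟨t, -, rfl⟩
    exact (hzero t).le
  · simpa only [hzero] using tendsto_const_nhds

lemma exists_mem_sepPart_tendsto_wkNorm {p : ℝ} {B : ℕ → H →L[ℂ] H}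
    (h : Tendsto (fun n => distToSepPart p (B n)) atTop (𝓝 0)) :
    ∃ V : ℕ → H →L[ℂ] H, (∀ n, V n ∈ sepPart p) ∧
      Tendsto (fun n => wkNorm p (B n - V n)) atTop (𝓝 0) := by
  have hclose : ∀ n : ℕ, ∃ V ∈ sepPart p,
      wkNorm p (B n - V) < distToSepPart p (B n) + 1 / (n + 1) := fun n => by
    obtain ⟨_, ⟨V, hV, rfl⟩, hlt⟩ := Real.lt_sInf_add_pos
      (Set.Nonempty.image (fun V => wkNorm p (B n - V)) ⟨0, zero_mem_sepPart p⟩)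
      (show (0 : ℝ) < 1 / (n + 1) by positivity)
    exact ⟨V, hV, hlt⟩
  choose V hV hlt using hclose
  refine ⟨V, hV, tendsto_of_tendsto_of_tendsto_of_le_of_le tendsto_const_nhds ?_
    (fun n => wkNorm_nonneg p _) fun n => (hlt n).le⟩
  simpa using h.add tendsto_one_div_add_atTop_nhds_zero_nat

/-- `ℝ≥0∞`-valued, so that the `limsup` and `liminf` at infinity exist for every operator. -/
noncomputable def scaledSvfLimsup (p : ℝ) (A : H →L[ℂ] H) : ℝ≥0∞ :=
  limsup (fun t => ENNReal.ofReal (scaledSvf p A t)) atTop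

noncomputable def scaledSvfLiminf (p : ℝ) (A : H →L[ℂ] H) : ℝ≥0∞ :=
  liminf (fun t => ENNReal.ofReal (scaledSvf p A t)) atTop

section Asymptotics

variable {p θ : ℝ}

lemma scaledSvfLimsup_eq_of_tendsto {A : H →L[ℂ] H} {b : ℝ}
    (h : Tendsto (scaledSvf p A) atTop (𝓝 b)) : scaledSvfLimsup p A = ENNReal.ofReal b :=
  (ENNReal.tendsto_ofReal h).limsup_eq

lemma scaledSvfLiminf_eq_of_tendsto {A : H →L[ℂ] H} {b : ℝ}
    (h : Tendsto (scaledSvf p A) atTop (𝓝 b)) : scaledSvfLiminf p A = ENNReal.ofReal b :=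
  (ENNReal.tendsto_ofReal h).liminf_eq

lemma scaledSvfLimsup_eq_zero_of_mem_sepPart {V : H →L[ℂ] H} (hV : V ∈ sepPart p) :
    scaledSvfLimsup p V = 0 := by
  simpa using scaledSvfLimsup_eq_of_tendsto hV.2

lemma scaledSvfLimsup_le_wkNorm {A : H →L[ℂ] H} (hA : MemWeakLp p A) :
    scaledSvfLimsup p A ≤ ENNReal.ofReal (wkNorm p A) :=
  limsup_le_of_le (by isBoundedDefault) <| (eventually_gt_atTop 0).mono fun t ht =>
    ENNReal.ofReal_le_ofReal (le_csSup hA.2 ⟨t, ht, rfl⟩)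

lemma scaledSvfLimsup_neg (A : H →L[ℂ] H) : scaledSvfLimsup p (-A) = scaledSvfLimsup p A := by
  simp only [scaledSvfLimsup, scaledSvf, svf_neg]

lemma ofReal_scaledSvf_add_le (A B : H →L[ℂ] H) (hθ : θ ∈ Ioo 0 1) {t : ℝ} (ht : 0 ≤ t) :
    ENNReal.ofReal (scaledSvf p (A + B) t) ≤
      ENNReal.ofReal (θ ^ (-(1 / p))) * ENNReal.ofReal (scaledSvf p A (θ * t)) +
        ENNReal.ofReal ((1 - θ) ^ (-(1 / p))) *
          ENNReal.ofReal (scaledSvf p B ((1 - θ) * t)) := by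
  have h1θ : 0 ≤ 1 - θ := (sub_pos.2 hθ.2).le
  rw [← ENNReal.ofReal_mul (Real.rpow_nonneg hθ.1.le _),
    ← ENNReal.ofReal_mul (Real.rpow_nonneg h1θ _), ← ENNReal.ofReal_add
      (mul_nonneg (Real.rpow_nonneg hθ.1.le _) (scaledSvf_nonneg p A (mul_nonneg hθ.1.le ht)))
      (mul_nonneg (Real.rpow_nonneg h1θ _) (scaledSvf_nonneg p B (mul_nonneg h1θ ht)))]
  exact ENNReal.ofReal_le_ofReal (scaledSvf_add_le p A B hθ ht)

lemma scaledSvfLimsup_add_le (A B : H →L[ℂ] H) (hθ : θ ∈ Ioo 0 1) :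
    scaledSvfLimsup p (A + B) ≤
      ENNReal.ofReal (θ ^ (-(1 / p))) * scaledSvfLimsup p A +
        ENNReal.ofReal ((1 - θ) ^ (-(1 / p))) * scaledSvfLimsup p B :=
  calc scaledSvfLimsup p (A + B)
      ≤ limsup ((fun t => ENNReal.ofReal (θ ^ (-(1 / p))) *
            ENNReal.ofReal (scaledSvf p A (θ * t))) +
          fun t => ENNReal.ofReal ((1 - θ) ^ (-(1 / p))) *
            ENNReal.ofReal (scaledSvf p B ((1 - θ) * t))) atTop :=
        limsup_le_limsup <| (eventually_ge_atTop 0).mono fun _ ht =>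
          ofReal_scaledSvf_add_le A B hθ ht
    _ ≤ _ := ENNReal.limsup_add_le_limsup_add_limsup _ _
    _ = _ := by
        rw [ENNReal.limsup_const_mul_of_ne_top ENNReal.ofReal_ne_top,
          ENNReal.limsup_const_mul_of_ne_top ENNReal.ofReal_ne_top,
          limsup_comp_const_mul (fun t => ENNReal.ofReal (scaledSvf p A t)) hθ.1,
          limsup_comp_const_mul (fun t => ENNReal.ofReal (scaledSvf p B t)) (sub_pos.2 hθ.2)]
        rfl

lemma scaledSvfLiminf_add_le (A B : H →L[ℂ] H) (hθ : θ ∈ Ioo 0 1) :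
    scaledSvfLiminf p (A + B) ≤
      ENNReal.ofReal (θ ^ (-(1 / p))) * scaledSvfLiminf p A +
        ENNReal.ofReal ((1 - θ) ^ (-(1 / p))) * scaledSvfLimsup p B :=
  calc scaledSvfLiminf p (A + B)
      ≤ liminf ((fun t => ENNReal.ofReal (θ ^ (-(1 / p))) *
            ENNReal.ofReal (scaledSvf p A (θ * t))) +
          fun t => ENNReal.ofReal ((1 - θ) ^ (-(1 / p))) *
            ENNReal.ofReal (scaledSvf p B ((1 - θ) * t))) atTop :=
        liminf_le_liminf <| (eventually_ge_atTop 0).mono fun _ ht =>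
          ofReal_scaledSvf_add_le A B hθ ht
    _ ≤ _ := ENNReal.liminf_add_le_liminf_add_limsup _ _
    _ = _ := by
        rw [ENNReal.liminf_const_mul_of_ne_top ENNReal.ofReal_ne_top,
          ENNReal.limsup_const_mul_of_ne_top ENNReal.ofReal_ne_top,
          liminf_comp_const_mul (fun t => ENNReal.ofReal (scaledSvf p A t)) hθ.1,
          limsup_comp_const_mul (fun t => ENNReal.ofReal (scaledSvf p B t)) (sub_pos.2 hθ.2)]
        rfl

lemma scaledSvfLimsup_sub_le (A B : H →L[ℂ] H) (hθ : θ ∈ Ioo 0 1) :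
    scaledSvfLimsup p (A - B) ≤
      ENNReal.ofReal (θ ^ (-(1 / p))) * scaledSvfLimsup p A +
        ENNReal.ofReal ((1 - θ) ^ (-(1 / p))) * scaledSvfLimsup p B := by
  simpa only [← sub_eq_add_neg, scaledSvfLimsup_neg] using scaledSvfLimsup_add_le A (-B) hθ

lemma scaledSvfLimsup_le_of_mem_sepPart {V : H →L[ℂ] H} (hV : V ∈ sepPart p) (A B : H →L[ℂ] H)
    (hθ : θ ∈ Ioo 0 1) :
    scaledSvfLimsup p A ≤
      ENNReal.ofReal (θ ^ (-(1 / p))) ^ 2 * scaledSvfLimsup p B +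
        ENNReal.ofReal ((1 - θ) ^ (-(1 / p))) * scaledSvfLimsup p (B - A - V) :=
  calc scaledSvfLimsup p A = scaledSvfLimsup p ((B - V) - (B - A - V)) := by abel_nf
    _ ≤ ENNReal.ofReal (θ ^ (-(1 / p))) * scaledSvfLimsup p (B - V) +
          ENNReal.ofReal ((1 - θ) ^ (-(1 / p))) * scaledSvfLimsup p (B - A - V) :=
        scaledSvfLimsup_sub_le _ _ hθ
    _ ≤ ENNReal.ofReal (θ ^ (-(1 / p))) * (ENNReal.ofReal (θ ^ (-(1 / p))) * scaledSvfLimsup p B +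
            ENNReal.ofReal ((1 - θ) ^ (-(1 / p))) * scaledSvfLimsup p V) +
          ENNReal.ofReal ((1 - θ) ^ (-(1 / p))) * scaledSvfLimsup p (B - A - V) := by
        gcongr
        exact scaledSvfLimsup_sub_le _ _ hθ
    _ = _ := by rw [scaledSvfLimsup_eq_zero_of_mem_sepPart hV]; ring

lemma scaledSvfLiminf_le_of_mem_sepPart {V : H →L[ℂ] H} (hV : V ∈ sepPart p) (A B : H →L[ℂ] H)
    (hθ : θ ∈ Ioo 0 1) :
    scaledSvfLiminf p B ≤
      ENNReal.ofReal (θ ^ (-(1 / p))) ^ 2 * scaledSvfLiminf p A +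
        ENNReal.ofReal ((1 - θ) ^ (-(1 / p))) * scaledSvfLimsup p (B - A - V) :=
  calc scaledSvfLiminf p B = scaledSvfLiminf p ((A + V) + (B - A - V)) := by abel_nf
    _ ≤ ENNReal.ofReal (θ ^ (-(1 / p))) * scaledSvfLiminf p (A + V) +
          ENNReal.ofReal ((1 - θ) ^ (-(1 / p))) * scaledSvfLimsup p (B - A - V) :=
        scaledSvfLiminf_add_le _ _ hθ
    _ ≤ ENNReal.ofReal (θ ^ (-(1 / p))) * (ENNReal.ofReal (θ ^ (-(1 / p))) * scaledSvfLiminf p A +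
            ENNReal.ofReal ((1 - θ) ^ (-(1 / p))) * scaledSvfLimsup p V) +
          ENNReal.ofReal ((1 - θ) ^ (-(1 / p))) * scaledSvfLimsup p (B - A - V) := by
        gcongr
        exact scaledSvfLiminf_add_le _ _ hθ
    _ = _ := by rw [scaledSvfLimsup_eq_zero_of_mem_sepPart hV]; ring

end Asymptotics

theorem stmt18_general (p : ℝ) (T : H →L[ℂ] H) (hT : MemWeakLp p T)
    (Tn : ℕ → (H →L[ℂ] H)) (hTn : ∀ n, MemWeakLp p (Tn n)) (a : ℕ → ℝ)
    (hlim : ∀ n, Tendsto (fun t : ℝ => t ^ (1 / p) * svf (Tn n) t) atTop (𝓝 (a n)))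
    (hdist : Tendsto (fun n => distToSepPart p (Tn n - T)) atTop (𝓝 0)) :
    ∃ L : ℝ, Tendsto a atTop (𝓝 L) ∧
      Tendsto (fun t : ℝ => t ^ (1 / p) * svf T t) atTop (𝓝 L) := by
  obtain ⟨V, hV, hVT⟩ := exists_mem_sepPart_tendsto_wkNorm hdist
  have hW (n : ℕ) : scaledSvfLimsup p (Tn n - T - V n) ≤
      ENNReal.ofReal (wkNorm p (Tn n - T - V n)) :=
    scaledSvfLimsup_le_wkNorm (((hTn n).sub hT).sub (hV n).1)
  have hc : Tendsto (fun θ : ℝ => ENNReal.ofReal (θ ^ (-(1 / p))) ^ 2) (𝓝[<] 1) (𝓝 1) := by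
    have h := (Real.continuousAt_rpow_const 1 (-(1 / p)) (Or.inl one_ne_zero)).tendsto
    simpa using
      ENNReal.Tendsto.pow (n := 2) (ENNReal.tendsto_ofReal (h.mono_left nhdsWithin_le_nhds))
  have hθ : ∀ᶠ θ in 𝓝[<] (1 : ℝ), θ ∈ Ioo 0 1 := Ioo_mem_nhdsLT one_pos
  have hupper : ∀ᶠ θ in 𝓝[<] (1 : ℝ), ∀ n, scaledSvfLimsup p T ≤
      ENNReal.ofReal (θ ^ (-(1 / p))) ^ 2 * ENNReal.ofReal (a n) +
        ENNReal.ofReal ((1 - θ) ^ (-(1 / p))) * ENNReal.ofReal (wkNorm p (Tn n - T - V n)) :=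
    hθ.mono fun θ hθ n => (scaledSvfLimsup_le_of_mem_sepPart (hV n) T (Tn n) hθ).trans <| by
      rw [scaledSvfLimsup_eq_of_tendsto (hlim n)]
      gcongr
      exact hW n
  have hlower : ∀ᶠ θ in 𝓝[<] (1 : ℝ), ∀ n, ENNReal.ofReal (a n) ≤
      ENNReal.ofReal (θ ^ (-(1 / p))) ^ 2 * scaledSvfLiminf p T +
        ENNReal.ofReal ((1 - θ) ^ (-(1 / p))) * ENNReal.ofReal (wkNorm p (Tn n - T - V n)) :=
    hθ.mono fun θ hθ n => by
      rw [← scaledSvfLiminf_eq_of_tendsto (hlim n)]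
      refine (scaledSvfLiminf_le_of_mem_sepPart (hV n) T (Tn n) hθ).trans ?_
      gcongr
      exact hW n
  have hS : scaledSvfLimsup p T ≠ ∞ :=
    ne_top_of_le_ne_top ENNReal.ofReal_ne_top (scaledSvfLimsup_le_wkNorm hT)
  obtain ⟨hIS, ha⟩ := ENNReal.eq_and_tendsto_of_le_mul_add hc (fun _ => ENNReal.ofReal_ne_top)
    liminf_le_limsup hS (by simpa using ENNReal.tendsto_ofReal hVT) hupper hlower
  have ha_nonneg (n : ℕ) : 0 ≤ a n :=
    ge_of_tendsto (hlim n) ((eventually_ge_atTop 0).mono fun _ ht => scaledSvf_nonneg p _ ht)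
  exact ⟨_, ha.toReal_of_ofReal hS (Eventually.of_forall ha_nonneg),
    (tendsto_of_liminf_eq_limsup hIS rfl).toReal_of_ofReal hS
      ((eventually_ge_atTop 0).mono fun _ ht => scaledSvf_nonneg p T ht)⟩

/-- **Birman–Solomyak limit lemma.** Let `p > 0`, `T ∈ L_{p,∞}`, and `(T_n) ⊂ L_{p,∞}`
with `lim_{t→∞} t^{1/p} μ(t,T_n) = a_n` for each `n` and
`dist_{L_{p,∞}}(T_n - T, (L_{p,∞})₀) → 0`.  Then `lim a_n` exists and
`lim_{t→∞} t^{1/p} μ(t,T) = lim_n a_n`. -/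
theorem stmt18 (p : ℝ) (hp : 0 < p) (T : H →L[ℂ] H) (hT : MemWeakLp p T)
    (Tn : ℕ → (H →L[ℂ] H)) (hTn : ∀ n, MemWeakLp p (Tn n)) (a : ℕ → ℝ)
    (hlim : ∀ n, Tendsto (fun t : ℝ => t ^ (1 / p) * svf (Tn n) t) atTop (𝓝 (a n)))
    (hdist : Tendsto (fun n => distToSepPart p (Tn n - T)) atTop (𝓝 0)) :
    ∃ L : ℝ, Tendsto a atTop (𝓝 L) ∧
      Tendsto (fun t : ℝ => t ^ (1 / p) * svf T t) atTop (𝓝 L) :=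
  stmt18_general p T hT Tn hTn a hlim hdist
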